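/- arXiv:2505.08522 — 6 statements merged into one kernel-verified Lean document; each statement's English description precedes it below -/
import Mathlib

section
/- Preferential propositional dependence logic satisfies System C: for every preferential model W for PDL, the entailment relation ⊢_W satisfies the rules (Ref), (LLE), (RW), (Cut), and (CM). -/
/-- PDL-formulas in negation normal form over variables `V`,
including dependence atoms `dep [a₁,…,a_k] b`. -/
inductive PDL (V : Type) : Type
  | pos : V → PDL V
  | neg : V → PDL V
  | bot : PDL V
  | top : PDL V
  | dep : List V → V → PDL V
  | conj : PDL V → PDL V → PDL V
  | disj : PDL V → PDL V → PDL V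

/-- Team semantics of PDL-formulas: a team is a set of valuations `V → Bool`. -/
def PDL.tsat {V : Type} : PDL V → Set (V → Bool) → Prop
  | .pos p, X => ∀ v ∈ X, v p = true
  | .neg p, X => ∀ v ∈ X, v p = false
  | .bot, X => X = ∅
  | .top, _ => True
  | .dep as b, X => ∀ v ∈ X, ∀ v' ∈ X, (∀ a ∈ as, v a = v' a) → v b = v' b
  | .conj φ ψ, X => PDL.tsat φ X ∧ PDL.tsat ψ X
  | .disj φ ψ, X => ∃ Y Z : Set (V → Bool), X = Y ∪ Z ∧ PDL.tsat φ Y ∧ PDL.tsat ψ Z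

/-- A preferential model for PDL over the variables `V`: a set of states `S`,
a labelling of states by teams, and a smooth strict partial order on states. -/
structure PrefModel (V : Type) where
  S : Type
  label : S → Set (V → Bool)
  lt : S → S → Prop
  irrefl : ∀ s, ¬ lt s s
  trans : ∀ {s t u}, lt s t → lt t u → lt s u
  smooth : ∀ (φ : PDL V) (s : S), PDL.tsat φ (label s) →
    (∀ s', PDL.tsat φ (label s') → ¬ lt s' s) ∨
      ∃ s', PDL.tsat φ (label s') ∧ (∀ s'', PDL.tsat φ (label s'') → ¬ lt s'' s') ∧ lt s' s

/-- `s` is a `≺`-minimal state among those whose label satisfies `φ`. -/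
def PrefModel.minimal {V : Type} (W : PrefModel V) (φ : PDL V) (s : W.S) : Prop :=
  PDL.tsat φ (W.label s) ∧ ∀ s', PDL.tsat φ (W.label s') → ¬ W.lt s' s

/-- Preferential entailment `φ ⊢_W ψ`. -/
def PrefModel.ent {V : Type} (W : PrefModel V) (φ ψ : PDL V) : Prop :=
  ∀ s, W.minimal φ s → PDL.tsat ψ (W.label s)

/-- `min(⟦φ⟧, ≺)`: the set of teams labelling `≺`-minimal states of `S(φ)`. -/
def PrefModel.minTeams {V : Type} (W : PrefModel V) (φ : PDL V) :
    Set (Set (V → Bool)) :=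
  {X | ∃ s, W.minimal φ s ∧ W.label s = X}

/-- Preferential propositional dependence logic satisfies System C:
(Ref), (LLE), (RW), (Cut) and (CM). -/
theorem PDL_pref_SystemC {V : Type} [Fintype V] [Nonempty V] (W : PrefModel V) :
    (∀ φ : PDL V, W.ent φ φ) ∧
    (∀ φ ψ γ : PDL V,
      {X : Set (V → Bool) | PDL.tsat φ X} = {X : Set (V → Bool) | PDL.tsat ψ X} →
      W.ent φ γ → W.ent ψ γ) ∧
    (∀ φ ψ γ : PDL V,
      {X : Set (V → Bool) | PDL.tsat φ X} ⊆ {X : Set (V → Bool) | PDL.tsat ψ X} →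
      W.ent γ φ → W.ent γ ψ) ∧
    (∀ φ ψ γ : PDL V, W.ent (.conj φ ψ) γ → W.ent φ ψ → W.ent φ γ) ∧
    (∀ φ ψ γ : PDL V, W.ent φ ψ → W.ent φ γ → W.ent (.conj φ ψ) γ) := by
  refine ⟨fun φ s hs => hs.1, ?_, ?_, ?_, ?_⟩
  · intro φ ψ γ h hφγ s hs
    have he : ∀ X, PDL.tsat φ X ↔ PDL.tsat ψ X := fun X => Set.ext_iff.mp h X
    exact hφγ s ⟨(he _).mpr hs.1, fun s' h' => hs.2 s' ((he _).mp h')⟩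
  · intro φ ψ γ h hγφ s hs
    exact h (hγφ s hs)
  · intro φ ψ γ h1 h2 s hs
    have hψ : PDL.tsat ψ (W.label s) := h2 s hs
    refine h1 s ⟨⟨hs.1, hψ⟩, fun s' h' => hs.2 s' h'.1⟩
  · intro φ ψ γ h1 h2 s hs
    have hφ : PDL.tsat φ (W.label s) := hs.1.1
    rcases W.smooth φ s hφ with hmin | ⟨s', hs', hmin', hlt⟩
    · exact h2 s ⟨hφ, hmin⟩
    · exact absurd hlt (hs.2 s' ⟨hs', h1 s' ⟨hs', hmin'⟩⟩)
end

section
/- If a preferential model W for PDL satisfies property (⋆) for all PDL-formulas φ, ψ, then the entailment relation ⊢_W satisfies the rule (Or): whenever φ ⊢_W γ and ψ ⊢_W γ, also φ∨ψ ⊢_W γ. -/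
/-- Property (⋆) for formulas `φ, ψ`:
`min(⟦φ∨ψ⟧, ≺) ⊆ min(⟦φ⟧, ≺) ∪ min(⟦ψ⟧, ≺)`. -/
def PrefModel.star {V : Type} (W : PrefModel V) (φ ψ : PDL V) : Prop :=
  W.minTeams (.disj φ ψ) ⊆ W.minTeams φ ∪ W.minTeams ψ

/-- If a preferential model for PDL satisfies (⋆) for all formulas,
then its entailment relation satisfies the rule (Or). -/
theorem PDL_star_implies_Or {V : Type} [Fintype V] [Nonempty V] (W : PrefModel V)
    (hstar : ∀ φ ψ : PDL V, W.star φ ψ) :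
    ∀ φ ψ γ : PDL V, W.ent φ γ → W.ent ψ γ → W.ent (.disj φ ψ) γ := by
  intro φ ψ γ hφ hψ s hmin
  have hmem : W.label s ∈ W.minTeams (.disj φ ψ) := ⟨s, hmin, rfl⟩
  rcases hstar φ ψ hmem with ⟨s', hs', heq⟩ | ⟨s', hs', heq⟩
  · have := hφ s' hs'; rwa [heq] at this
  · have := hψ s' hs'; rwa [heq] at this
end

section
/- The formula Θ_X defines the family of subteams of X: for every team X over N = {p₁,…,p_n} and every team Y over N, Y ⊨ Θ_X if and only if Y ⊆ X. -/
/-- PL-formulas in negation normal form over variables `V`. -/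
inductive PL (V : Type) : Type
  | pos : V → PL V
  | neg : V → PL V
  | bot : PL V
  | top : PL V
  | conj : PL V → PL V → PL V
  | disj : PL V → PL V → PL V

/-- Team semantics of PL-formulas. -/
def PL.tsat {V : Type} : PL V → Set (V → Bool) → Prop
  | .pos p, X => ∀ v ∈ X, v p = true
  | .neg p, X => ∀ v ∈ X, v p = false
  | .bot, X => X = ∅
  | .top, _ => True
  | .conj φ ψ, X => PL.tsat φ X ∧ PL.tsat ψ X
  | .disj φ ψ, X => ∃ Y Z : Set (V → Bool), X = Y ∪ Z ∧ PL.tsat φ Y ∧ PL.tsat ψ Z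

/-- Finite conjunction of a list of formulas (empty conjunction is `⊤`). -/
def PL.bigConj {V : Type} (l : List (PL V)) : PL V := l.foldr .conj .top

/-- Finite disjunction of a list of formulas (empty disjunction is `⊥`). -/
def PL.bigDisj {V : Type} (l : List (PL V)) : PL V := l.foldr .disj .bot

/-- The conjunction `p₁^{v(p₁)} ∧ ⋯ ∧ p_n^{v(p_n)}` describing the valuation `v`,
where `p^1 = p` and `p^0 = ¬p`. -/
noncomputable def PL.lineOf {V : Type} [Fintype V] (v : V → Bool) : PL V :=
  PL.bigConj ((Finset.univ : Finset V).toList.map fun p =>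
    if v p then .pos p else .neg p)

/-- The formula `Θ_X := ⋁_{v ∈ X} (p₁^{v(p₁)} ∧ ⋯ ∧ p_n^{v(p_n)})`. -/
noncomputable def PL.Theta {V : Type} [Fintype V] (X : Finset (V → Bool)) : PL V :=
  PL.bigDisj (X.toList.map PL.lineOf)

/-!
Each line formula `lineOf v` defines the subteams of `{v}`, and if `φ`, `ψ` define the subteams
of `A` and `B` then `φ ∨ ψ` defines the subteams of `A ∪ B` (split `Y` as `(Y ∩ A) ∪ (Y ∩ B)`).
So `Θ_X` defines the subteams of `⋃_{v ∈ X} {v} = X`.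
-/

namespace PL

variable {V : Type}

theorem tsat_bigConj (l : List (PL V)) (Y : Set (V → Bool)) :
    (bigConj l).tsat Y ↔ ∀ φ ∈ l, φ.tsat Y := by
  induction l with
  | nil => simp [bigConj, tsat]
  | cons φ l ih => simp_all [bigConj, tsat]

theorem tsat_literal (p : V) (b : Bool) (Y : Set (V → Bool)) :
    (if b then pos p else neg p).tsat Y ↔ ∀ w ∈ Y, w p = b := by
  cases b <;> simp [tsat]

theorem tsat_disj_of_subset_iff {φ ψ : PL V} {A B : Set (V → Bool)}
    (hφ : ∀ Y, φ.tsat Y ↔ Y ⊆ A) (hψ : ∀ Y, ψ.tsat Y ↔ Y ⊆ B) (Y : Set (V → Bool)) :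
    (disj φ ψ).tsat Y ↔ Y ⊆ A ∪ B := by
  simp only [tsat, hφ, hψ]
  constructor
  · rintro ⟨Y₁, Y₂, rfl, h₁, h₂⟩
    exact Set.union_subset_union h₁ h₂
  · intro hY
    refine ⟨Y ∩ A, Y ∩ B, ?_, Set.inter_subset_right, Set.inter_subset_right⟩
    rw [← Set.inter_union_distrib_left, Set.inter_eq_left.mpr hY]

theorem tsat_bigDisj_map_of_subset_iff {ι : Type*} {f : ι → PL V} {S : ι → Set (V → Bool)}
    (hf : ∀ i Y, (f i).tsat Y ↔ Y ⊆ S i) (l : List ι) (Y : Set (V → Bool)) :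
    (bigDisj (l.map f)).tsat Y ↔ Y ⊆ ⋃ i ∈ l, S i := by
  induction l generalizing Y with
  | nil => simp [bigDisj, tsat]
  | cons i l ih =>
    simp only [List.map_cons, List.mem_cons, Set.iUnion_iUnion_eq_or_left]
    exact tsat_disj_of_subset_iff (hf i) ih Y

variable [Fintype V]

theorem tsat_lineOf (v : V → Bool) (Y : Set (V → Bool)) :
    (lineOf v).tsat Y ↔ Y ⊆ {v} := by
  simp only [lineOf, tsat_bigConj, List.forall_mem_map, Finset.mem_toList,
    Finset.mem_univ, true_implies, tsat_literal, Set.subset_singleton_iff, funext_iff]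
  exact ⟨fun h w hw p => h p w hw, fun h p w hw => h w hw p⟩

end PL

theorem Theta_defines_subteams_general {V : Type} [Fintype V]
    (X : Finset (V → Bool)) (Y : Set (V → Bool)) :
    PL.tsat (PL.Theta X) Y ↔ Y ⊆ (X : Set (V → Bool)) := by
  rw [PL.Theta, PL.tsat_bigDisj_map_of_subset_iff PL.tsat_lineOf]
  simp [Set.subset_def]

/-- `Θ_X` defines the family of subteams of `X`: a team `Y` satisfies `Θ_X`
if and only if `Y ⊆ X`. -/
theorem Theta_defines_subteams {V : Type} [Fintype V] [Nonempty V]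
    (X : Finset (V → Bool)) (Y : Set (V → Bool)) :
    PL.tsat (PL.Theta X) Y ↔ Y ⊆ (X : Set (V → Bool)) :=
  Theta_defines_subteams_general X Y
end

section
/- A preferential model W for PDL satisfies property (⋆) for all PDL-formulas φ, ψ if and only if W satisfies property (△). -/
/-- Property (△): every state labelled by a team of size `> 1` has a strictly
preferred state labelled by a proper subteam. -/
def PrefModel.triangle {V : Type} (W : PrefModel V) : Prop :=
  ∀ s : W.S, 1 < (W.label s).ncard →
    ∃ s' : W.S, W.label s' ⊂ W.label s ∧ W.lt s' s

/-- The empty team satisfies every formula. -/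
lemma PDL.tsat_empty {V : Type} (φ : PDL V) : φ.tsat ∅ := by
  induction φ with
  | pos p => intro v hv; exact absurd hv (Set.notMem_empty v)
  | neg p => intro v hv; exact absurd hv (Set.notMem_empty v)
  | bot => rfl
  | top => trivial
  | dep as b => intro v hv; exact absurd hv (Set.notMem_empty v)
  | conj φ ψ ihφ ihψ => exact ⟨ihφ, ihψ⟩
  | disj φ ψ ihφ ihψ => exact ⟨∅, ∅, by simp, ihφ, ihψ⟩

/-- Downward closure of PDL. -/
lemma PDL.tsat_mono {V : Type} (φ : PDL V) {X Y : Set (V → Bool)}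
    (h : φ.tsat X) (hYX : Y ⊆ X) : φ.tsat Y := by
  induction φ generalizing X Y with
  | pos p => intro v hv; exact h v (hYX hv)
  | neg p => intro v hv; exact h v (hYX hv)
  | bot => subst h; exact Set.subset_eq_empty hYX rfl
  | top => trivial
  | dep as b => intro v hv v' hv' hag; exact h v (hYX hv) v' (hYX hv') hag
  | conj φ ψ ihφ ihψ => exact ⟨ihφ h.1 hYX, ihψ h.2 hYX⟩
  | disj φ ψ ihφ ihψ =>
    obtain ⟨A, B, hX, hA, hB⟩ := h
    refine ⟨Y ∩ A, Y ∩ B, ?_, ihφ hA Set.inter_subset_right,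
      ihψ hB Set.inter_subset_right⟩
    rw [← Set.inter_union_distrib_left, ← hX,
      Set.inter_eq_self_of_subset_left hYX]

lemma PDL.tsat_disj_left {V : Type} {φ : PDL V} (ψ : PDL V) {X : Set (V → Bool)}
    (h : φ.tsat X) : (PDL.disj φ ψ).tsat X :=
  ⟨X, ∅, by simp, h, PDL.tsat_empty ψ⟩

/-- Characteristic formula of a single valuation. -/
noncomputable def PDL.chi {V : Type} [Fintype V] (v : V → Bool) : PDL V :=
  (Finset.univ : Finset V).toList.foldr
    (fun p acc => PDL.conj (if v p then PDL.pos p else PDL.neg p) acc) PDL.top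

lemma PDL.tsat_chi_aux {V : Type} (v : V → Bool) (L : List V) (Y : Set (V → Bool)) :
    (L.foldr (fun p acc => PDL.conj (if v p then PDL.pos p else PDL.neg p) acc)
      PDL.top).tsat Y ↔ ∀ u ∈ Y, ∀ p ∈ L, u p = v p := by
  induction L with
  | nil => simp [PDL.tsat]
  | cons p L ih =>
    simp only [List.foldr_cons, PDL.tsat, ih, List.mem_cons]
    constructor
    · rintro ⟨h1, h2⟩ u hu q (rfl | hq)
      · by_cases hvp : v q = true
        · simp only [hvp, if_pos] at h1; rw [h1 u hu, hvp]
        · simp only [Bool.not_eq_true] at hvp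
          simp only [hvp, Bool.false_eq_true, if_neg, if_false] at h1
          rw [h1 u hu, hvp]
      · exact h2 u hu q hq
    · intro h
      refine ⟨?_, fun u hu q hq => h u hu q (Or.inr hq)⟩
      by_cases hvp : v p = true
      · simp only [hvp, if_pos]
        intro u hu; rw [h u hu p (Or.inl rfl), hvp]
      · simp only [Bool.not_eq_true] at hvp
        simp only [hvp, Bool.false_eq_true, if_neg, if_false]
        intro u hu; rw [h u hu p (Or.inl rfl), hvp]

lemma PDL.tsat_chi {V : Type} [Fintype V] (v : V → Bool) (Y : Set (V → Bool)) :
    (PDL.chi v).tsat Y ↔ Y ⊆ {v} := by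
  rw [PDL.chi, PDL.tsat_chi_aux]
  constructor
  · intro h u hu
    have : u = v := funext fun p => h u hu p (by simp)
    simp [this]
  · intro h u hu p _
    have : u = v := h hu
    simp [this]

/-- Formula whose satisfying teams are exactly the subsets of `{u | u ∈ L}`. -/
noncomputable def PDL.ofList {V : Type} [Fintype V] (L : List (V → Bool)) : PDL V :=
  L.foldr (fun v acc => PDL.disj (PDL.chi v) acc) PDL.bot

lemma PDL.tsat_ofList {V : Type} [Fintype V] (L : List (V → Bool))
    (Y : Set (V → Bool)) : (PDL.ofList L).tsat Y ↔ ∀ u ∈ Y, u ∈ L := by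
  induction L generalizing Y with
  | nil => simp [PDL.ofList, PDL.tsat, Set.eq_empty_iff_forall_notMem]
  | cons v L ih =>
    simp only [PDL.ofList, List.foldr_cons] at ih ⊢
    constructor
    · rintro ⟨A, B, hY, hA, hB⟩ u hu
      rw [PDL.tsat_chi] at hA
      rw [hY] at hu
      rcases hu with hu | hu
      · have : u = v := hA hu
        simp [this]
      · exact List.mem_cons_of_mem _ ((ih B).mp hB u hu)
    · intro h
      refine ⟨Y ∩ {v}, Y ∩ {u | u ∈ L}, ?_, ?_, ?_⟩
      · rw [← Set.inter_union_distrib_left]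
        apply (Set.inter_eq_self_of_subset_left ?_).symm
        intro u hu
        rcases List.mem_cons.mp (h u hu) with h' | h'
        · exact Or.inl (by simp [h'])
        · exact Or.inr h'
      · rw [PDL.tsat_chi]; exact Set.inter_subset_right
      · exact (ih _).mpr fun u hu => hu.2

/-- A preferential model for PDL satisfies (⋆) for all PDL-formulas
if and only if it satisfies (△). -/
theorem PDL_star_iff_triangle {V : Type} [Fintype V] [Nonempty V]
    (W : PrefModel V) :
    (∀ φ ψ : PDL V, W.star φ ψ) ↔ W.triangle := by
  constructor
  · -- (⋆) → (△)
    intro hstar s hs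
    set X := W.label s with hXdef
    obtain ⟨u, hu, w, hw, huw⟩ := (Set.one_lt_ncard (Set.toFinite X)).mp hs
    set Lu := (X \ {u}).toFinite.toFinset.toList with hLu
    set Lw := (X \ {w}).toFinite.toFinset.toList with hLw
    have hmemu : ∀ x, x ∈ Lu ↔ x ∈ X \ {u} := by
      intro x; rw [hLu, Finset.mem_toList, Set.Finite.mem_toFinset]
    have hmemw : ∀ x, x ∈ Lw ↔ x ∈ X \ {w} := by
      intro x; rw [hLw, Finset.mem_toList, Set.Finite.mem_toFinset]
    set φ := PDL.ofList Lu with hφ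
    set ψ := PDL.ofList Lw with hψ
    have hsatφ : ∀ Y, φ.tsat Y ↔ Y ⊆ X \ {u} := by
      intro Y; rw [hφ, PDL.tsat_ofList]
      constructor
      · intro h x hx; exact (hmemu x).mp (h x hx)
      · intro h x hx; exact (hmemu x).mpr (h hx)
    have hsatψ : ∀ Y, ψ.tsat Y ↔ Y ⊆ X \ {w} := by
      intro Y; rw [hψ, PDL.tsat_ofList]
      constructor
      · intro h x hx; exact (hmemw x).mp (h x hx)
      · intro h x hx; exact (hmemw x).mpr (h hx)
    have hXsat : (PDL.disj φ ψ).tsat X := by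
      refine ⟨X \ {u}, X \ {w}, ?_, (hsatφ _).mpr le_rfl, (hsatψ _).mpr le_rfl⟩
      ext x
      simp only [Set.mem_union, Set.mem_diff, Set.mem_singleton_iff]
      constructor
      · intro hx
        by_cases hxu : x = u
        · exact Or.inr ⟨hx, by rw [hxu]; exact huw⟩
        · exact Or.inl ⟨hx, hxu⟩
      · rintro (⟨hx, _⟩ | ⟨hx, _⟩) <;> exact hx
    -- a minimal state of φ ∨ ψ cannot have label X
    have hnotmin : ∀ t, W.minimal (PDL.disj φ ψ) t → W.label t ≠ X := by
      intro t hmt hlt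
      rcases hstar φ ψ ⟨t, hmt, rfl⟩ with ⟨t', ht', hlt'⟩ | ⟨t', ht', hlt'⟩
      · have : W.label t ⊆ X \ {u} := (hsatφ _).mp (hlt' ▸ ht'.1)
        rw [hlt] at this
        exact (this hu).2 rfl
      · have : W.label t ⊆ X \ {w} := (hsatψ _).mp (hlt' ▸ ht'.1)
        rw [hlt] at this
        exact (this hw).2 rfl
    rcases W.smooth (PDL.disj φ ψ) s hXsat with hmin | ⟨s', hs'sat, hs'min, hs'lt⟩
    · exact absurd rfl (hnotmin s ⟨hXsat, hmin⟩)
    · refine ⟨s', ?_, hs'lt⟩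
      have hmem : W.label s' ∈ W.minTeams (PDL.disj φ ψ) :=
        ⟨s', ⟨hs'sat, hs'min⟩, rfl⟩
      have hsub : W.label s' ⊆ X := by
        rcases hstar φ ψ hmem with ⟨t', ht', hlt'⟩ | ⟨t', ht', hlt'⟩
        · exact subset_trans ((hsatφ _).mp (hlt' ▸ ht'.1)) Set.diff_subset
        · exact subset_trans ((hsatψ _).mp (hlt' ▸ ht'.1)) Set.diff_subset
      exact HasSubset.Subset.ssubset_of_ne hsub
        (fun h => hnotmin s' ⟨hs'sat, hs'min⟩ h)
  · -- (△) → (⋆)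
    intro htri φ ψ X hX
    obtain ⟨s, ⟨hsat, hmin⟩, hlab⟩ := hX
    subst hlab
    -- the label of a minimal state is a subsingleton
    have hss : (W.label s).Subsingleton := by
      by_contra h
      rw [Set.not_subsingleton_iff] at h
      obtain ⟨u, hu, w, hw, huw⟩ := h
      have : 1 < (W.label s).ncard :=
        (Set.one_lt_ncard (Set.toFinite _)).mpr ⟨u, hu, w, hw, huw⟩
      obtain ⟨s', hsub, hlt⟩ := htri s this
      exact hmin s' (PDL.tsat_mono _ hsat hsub.1) hlt
    obtain ⟨A, B, hAB, hA, hB⟩ := hsat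
    have hcase : φ.tsat (W.label s) ∨ ψ.tsat (W.label s) := by
      rcases Set.eq_empty_or_nonempty A with hAe | ⟨a, ha⟩
      · right
        have : W.label s = B := by rw [hAB, hAe, Set.empty_union]
        rw [this]; exact hB
      · left
        have hAsub : A ⊆ W.label s := hAB ▸ Set.subset_union_left
        have : W.label s = A := by
          apply Set.Subset.antisymm _ hAsub
          intro x hx
          have : x = a := hss hx (hAsub ha)
          rw [this]; exact ha
        rw [this]; exact hA
    rcases hcase with h | h
    · left
      refine ⟨s, ⟨h, fun s'' hs'' hlt => ?_⟩, rfl⟩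
      exact hmin s'' (PDL.tsat_disj_left ψ hs'') hlt
    · right
      refine ⟨s, ⟨h, fun s'' hs'' hlt => ?_⟩, rfl⟩
      exact hmin s'' ⟨∅, W.label s'', by simp, PDL.tsat_empty φ, hs''⟩ hlt
end

section
/- Characterisation of System P for preferential propositional dependence logic: for every preferential model W = (S, ℓ, ≺) for PDL, the following are equivalent: (i) the entailment relation ⊢_W satisfies System P; (ii) W satisfies property (△); (iii) property (⋆) holds for all PDL-formulas φ, ψ. -/
/-- System P for the preferential entailment `⊢_W`:
(Ref), (LLE), (RW), (Cut), (CM) and (Or). -/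
def PrefModel.systemP {V : Type} (W : PrefModel V) : Prop :=
  (∀ φ : PDL V, W.ent φ φ) ∧
  (∀ φ ψ γ : PDL V,
    {X : Set (V → Bool) | PDL.tsat φ X} = {X : Set (V → Bool) | PDL.tsat ψ X} →
    W.ent φ γ → W.ent ψ γ) ∧
  (∀ φ ψ γ : PDL V,
    {X : Set (V → Bool) | PDL.tsat φ X} ⊆ {X : Set (V → Bool) | PDL.tsat ψ X} →
    W.ent γ φ → W.ent γ ψ) ∧
  (∀ φ ψ γ : PDL V, W.ent (.conj φ ψ) γ → W.ent φ ψ → W.ent φ γ) ∧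
  (∀ φ ψ γ : PDL V, W.ent φ ψ → W.ent φ γ → W.ent (.conj φ ψ) γ) ∧
  (∀ φ ψ γ : PDL V, W.ent φ γ → W.ent ψ γ → W.ent (.disj φ ψ) γ)

/-! Ref, LLE, RW, Cut and CM hold in every smooth model, and Or follows from (⋆). Since PDL is
downward closed, a minimal state of `S(φ ∨ ψ)` whose team satisfies neither disjunct contains two
distinct valuations, and (△) would give a preferred state with a smaller team, still in
`S(φ ∨ ψ)`; so (△) implies (⋆). Conversely, let the team `X` of `s` contain two valuations that
differ at `p`, and let `θ` be satisfied exactly by the subteams of `X`. The models of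
`(θ ∧ p) ∨ (θ ∧ ¬p)` are again the subteams of `X`, so unless `s` has a (△)-witness, smoothness
yields a minimal state of that formula labelled `X`. As `X` satisfies neither `p` nor `¬p`, nor
even `=(p)`, this refutes (⋆), and also (Or) with conclusion `=(p)`. -/

theorem Set.nontrivial_of_union_eq {α : Type*} {A B X : Set α} (hX : A ∪ B = X) (hA : A ≠ X)
    (hB : B ≠ X) : X.Nontrivial := by
  obtain ⟨a, haX, haA⟩ := exists_of_ssubset ((hX ▸ subset_union_left).ssubset_of_ne hA)
  obtain ⟨b, hbX, hbB⟩ := exists_of_ssubset ((hX ▸ subset_union_right).ssubset_of_ne hB)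
  have hbA : b ∈ A := ((hX ▸ hbX : b ∈ A ∪ B)).resolve_right hbB
  exact nontrivial_of_mem_mem_ne haX hbX fun hab => haA (hab ▸ hbA)

namespace PDL

variable {V : Type}

theorem tsat_empty_s10 (φ : PDL V) : φ.tsat ∅ := by
  induction φ with
  | conj _ _ ihφ ihψ => exact ⟨ihφ, ihψ⟩
  | disj _ _ ihφ ihψ => exact ⟨∅, ∅, (Set.union_empty _).symm, ihφ, ihψ⟩
  | _ => simp [tsat]

theorem tsat.mono {φ : PDL V} {X Y : Set (V → Bool)} (h : φ.tsat X) (hYX : Y ⊆ X) :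
    φ.tsat Y := by
  induction φ generalizing X Y with
  | pos | neg => exact fun v hv => h v (hYX hv)
  | bot => exact Set.subset_eq_empty (h ▸ hYX) rfl
  | top => trivial
  | dep => exact fun v hv v' hv' => h v (hYX hv) v' (hYX hv')
  | conj _ _ ihφ ihψ => exact ⟨ihφ h.1 hYX, ihψ h.2 hYX⟩
  | disj _ _ ihφ ihψ =>
    obtain ⟨A, B, rfl, hA, hB⟩ := h
    refine ⟨Y ∩ A, Y ∩ B, ?_, ihφ hA Set.inter_subset_right, ihψ hB Set.inter_subset_right⟩
    rw [← Set.inter_union_distrib_left, Set.inter_eq_left.2 hYX]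

theorem tsat_disj_of_left {φ ψ : PDL V} {X : Set (V → Bool)} (h : φ.tsat X) :
    (disj φ ψ).tsat X :=
  ⟨X, ∅, (Set.union_empty X).symm, h, tsat_empty_s10 ψ⟩

theorem tsat_disj_of_right {φ ψ : PDL V} {X : Set (V → Bool)} (h : ψ.tsat X) :
    (disj φ ψ).tsat X :=
  ⟨∅, X, (Set.empty_union X).symm, tsat_empty_s10 φ, h⟩

theorem tsat_dep_nil {p : V} {X : Set (V → Bool)} :
    (dep [] p).tsat X ↔ ∀ v ∈ X, ∀ w ∈ X, v p = w p := by
  simp [tsat]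

theorem tsat_dep_nil_of_pos {p : V} {X : Set (V → Bool)} (h : (pos p).tsat X) :
    (dep [] p).tsat X :=
  tsat_dep_nil.2 fun v hv w hw => (h v hv).trans (h w hw).symm

theorem tsat_dep_nil_of_neg {p : V} {X : Set (V → Bool)} (h : (neg p).tsat X) :
    (dep [] p).tsat X :=
  tsat_dep_nil.2 fun v hv w hw => (h v hv).trans (h w hw).symm

theorem exists_not_tsat_dep_nil {X : Set (V → Bool)} (hX : X.Nontrivial) :
    ∃ p, ¬ (dep [] p).tsat X := by
  obtain ⟨v, hv, w, hw, hvw⟩ := hX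
  obtain ⟨p, hp⟩ := Function.ne_iff.1 hvw
  exact ⟨p, fun h => hp (tsat_dep_nil.1 h v hv w hw)⟩

def caseSplit (φ : PDL V) (p : V) : PDL V := disj (conj φ (pos p)) (conj φ (neg p))

theorem tsat_caseSplit_of_tsat {φ : PDL V} {X : Set (V → Bool)} (h : φ.tsat X) (p : V) :
    (caseSplit φ p).tsat X := by
  refine ⟨{v ∈ X | v p = true}, {v ∈ X | v p = false}, ?_,
    ⟨h.mono fun v hv => hv.1, fun v hv => hv.2⟩, h.mono fun v hv => hv.1, fun v hv => hv.2⟩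
  ext v
  cases hv : v p <;> simp [hv]

theorem tsat_caseSplit {φ : PDL V} {X : Set (V → Bool)} (hφ : ∀ Y, φ.tsat Y ↔ Y ⊆ X) {p : V}
    {Y : Set (V → Bool)} : (caseSplit φ p).tsat Y ↔ Y ⊆ X := by
  refine ⟨?_, fun hY => tsat_caseSplit_of_tsat ((hφ Y).2 hY) p⟩
  rintro ⟨A, B, rfl, ⟨hA, -⟩, hB, -⟩
  exact Set.union_subset ((hφ A).1 hA) ((hφ B).1 hB)

theorem tsat_disj_iff_subset_union {φ ψ : PDL V} {A B : Set (V → Bool)}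
    (hφ : ∀ Y, φ.tsat Y ↔ Y ⊆ A) (hψ : ∀ Y, ψ.tsat Y ↔ Y ⊆ B) {X : Set (V → Bool)} :
    (disj φ ψ).tsat X ↔ X ⊆ A ∪ B := by
  constructor
  · rintro ⟨Y, Z, rfl, hY, hZ⟩
    exact Set.union_subset_union ((hφ Y).1 hY) ((hψ Z).1 hZ)
  · intro hX
    refine ⟨X ∩ A, X ∩ B, ?_, (hφ _).2 Set.inter_subset_right, (hψ _).2 Set.inter_subset_right⟩
    rw [← Set.inter_union_distrib_left, Set.inter_eq_left.2 hX]

def literal (v : V → Bool) (a : V) : PDL V := if v a then pos a else neg a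

theorem tsat_literal {v : V → Bool} {a : V} {X : Set (V → Bool)} :
    (literal v a).tsat X ↔ ∀ w ∈ X, w a = v a := by
  unfold literal
  cases v a <;> simp [tsat]

def bigConj (l : List (PDL V)) : PDL V := l.foldr conj top

theorem tsat_bigConj {l : List (PDL V)} {X : Set (V → Bool)} :
    (bigConj l).tsat X ↔ ∀ φ ∈ l, φ.tsat X := by
  induction l with
  | nil => simp [bigConj, tsat]
  | cons φ l ih => simp [bigConj, tsat, ← ih]

section Fintype

variable [Fintype V]

noncomputable def valuationChar (v : V → Bool) : PDL V :=
  bigConj ((Finset.univ : Finset V).toList.map (literal v))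

theorem tsat_valuationChar {v : V → Bool} {X : Set (V → Bool)} :
    (valuationChar v).tsat X ↔ X ⊆ {v} := by
  simp only [valuationChar, tsat_bigConj, List.mem_map, Finset.mem_toList, Finset.mem_univ,
    true_and, forall_exists_index, forall_apply_eq_imp_iff, tsat_literal]
  exact ⟨fun h w hw => funext fun a => h a w hw, fun h a w hw => by rw [h hw]⟩

noncomputable def subteamsOfList (l : List (V → Bool)) : PDL V :=
  l.foldr (fun v φ => disj (valuationChar v) φ) bot

theorem tsat_subteamsOfList {l : List (V → Bool)} {X : Set (V → Bool)} :
    (subteamsOfList l).tsat X ↔ X ⊆ {v | v ∈ l} := by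
  induction l generalizing X with
  | nil => simp [subteamsOfList, tsat]
  | cons v l ih =>
    rw [subteamsOfList, List.foldr_cons, ← subteamsOfList,
      tsat_disj_iff_subset_union (fun _ => tsat_valuationChar) (fun _ => ih)]
    simp only [List.mem_cons, Set.ofPred_or, Set.ofPred_eq_eq_singleton]

noncomputable def subteamsOf (X : Set (V → Bool)) : PDL V :=
  subteamsOfList (Set.toFinite X).toFinset.toList

theorem tsat_subteamsOf {X Y : Set (V → Bool)} : (subteamsOf X).tsat Y ↔ Y ⊆ X := by
  simp [subteamsOf, tsat_subteamsOfList]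

end Fintype

end PDL

namespace PrefModel

open PDL

variable {V : Type} (W : PrefModel V)

theorem minimal_or_exists_minimal_lt {φ : PDL V} {s : W.S} (h : φ.tsat (W.label s)) :
    W.minimal φ s ∨ ∃ s', W.minimal φ s' ∧ W.lt s' s :=
  (W.smooth φ s h).imp (fun hmin => ⟨h, hmin⟩) fun ⟨s', hs', hmin, hlt⟩ => ⟨s', ⟨hs', hmin⟩, hlt⟩

theorem minimal_congr {φ ψ : PDL V} (h : ∀ X, φ.tsat X ↔ ψ.tsat X) (s : W.S) :
    W.minimal φ s ↔ W.minimal ψ s := by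
  simp only [minimal, h]

theorem minimal_of_minimal_disj_left {φ ψ : PDL V} {s : W.S} (hs : W.minimal (disj φ ψ) s)
    (h : φ.tsat (W.label s)) : W.minimal φ s :=
  ⟨h, fun t ht => hs.2 t (tsat_disj_of_left ht)⟩

theorem minimal_of_minimal_disj_right {φ ψ : PDL V} {s : W.S} (hs : W.minimal (disj φ ψ) s)
    (h : ψ.tsat (W.label s)) : W.minimal ψ s :=
  ⟨h, fun t ht => hs.2 t (tsat_disj_of_right ht)⟩

theorem ent_refl (φ : PDL V) : W.ent φ φ := fun _ hs => hs.1

theorem ent_congr_left {φ ψ γ : PDL V} (h : ∀ X, φ.tsat X ↔ ψ.tsat X) (hφ : W.ent φ γ) :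
    W.ent ψ γ :=
  fun s hs => hφ s ((W.minimal_congr h s).2 hs)

theorem ent_mono_right {φ ψ γ : PDL V} (h : ∀ X, φ.tsat X → ψ.tsat X) (hγ : W.ent γ φ) :
    W.ent γ ψ :=
  fun s hs => h _ (hγ s hs)

theorem ent_cut {φ ψ γ : PDL V} (hψγ : W.ent (conj φ ψ) γ) (hφψ : W.ent φ ψ) : W.ent φ γ :=
  fun s hs => hψγ s ⟨⟨hs.1, hφψ s hs⟩, fun t ht => hs.2 t ht.1⟩

theorem ent_cautious_mono {φ ψ γ : PDL V} (hφψ : W.ent φ ψ) (hφγ : W.ent φ γ) :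
    W.ent (conj φ ψ) γ := by
  intro s ⟨⟨hφ, hψ⟩, hmin⟩
  rcases W.minimal_or_exists_minimal_lt hφ with hs | ⟨t, ht, hlt⟩
  · exact hφγ s hs
  · exact absurd hlt (hmin t ⟨ht.1, hφψ t ht⟩)

theorem ent_disj_of_star {φ ψ γ : PDL V} (hstar : W.star φ ψ) (hφ : W.ent φ γ)
    (hψ : W.ent ψ γ) : W.ent (disj φ ψ) γ := by
  intro s hs
  rcases hstar ⟨s, hs, rfl⟩ with ⟨t, ht, heq⟩ | ⟨t, ht, heq⟩
  · exact heq ▸ hφ t ht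
  · exact heq ▸ hψ t ht

theorem systemP_of_forall_star (h : ∀ φ ψ, W.star φ ψ) : W.systemP :=
  ⟨W.ent_refl, fun _ _ _ hφψ => W.ent_congr_left fun X => (Set.ext_iff.1 hφψ X),
    fun _ _ _ hφψ => W.ent_mono_right fun _ hX => hφψ hX, fun _ _ _ => W.ent_cut,
    fun _ _ _ => W.ent_cautious_mono, fun φ ψ _ => W.ent_disj_of_star (h φ ψ)⟩

theorem tsat_or_tsat_of_minimal_disj [Finite V] (ht : W.triangle) {φ ψ : PDL V} {s : W.S}
    (hs : W.minimal (disj φ ψ) s) : φ.tsat (W.label s) ∨ ψ.tsat (W.label s) := by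
  by_contra! hneither
  obtain ⟨A, B, hAB, hA, hB⟩ := hs.1
  have hnontriv : (W.label s).Nontrivial :=
    Set.nontrivial_of_union_eq hAB.symm (fun h => hneither.1 (h ▸ hA))
      fun h => hneither.2 (h ▸ hB)
  obtain ⟨t, hsub, hlt⟩ := ht s (Set.one_lt_ncard_iff_nontrivial.2 hnontriv)
  exact hs.2 t (hs.1.mono hsub.1) hlt

theorem star_of_triangle [Finite V] (ht : W.triangle) (φ ψ : PDL V) : W.star φ ψ := by
  rintro _ ⟨s, hs, rfl⟩
  rcases W.tsat_or_tsat_of_minimal_disj ht hs with h | h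
  · exact Or.inl ⟨s, W.minimal_of_minimal_disj_left hs h, rfl⟩
  · exact Or.inr ⟨s, W.minimal_of_minimal_disj_right hs h, rfl⟩

theorem exists_lt_ssubset_or_exists_minimal_eq {φ : PDL V} {s : W.S}
    (hs : φ.tsat (W.label s)) (hφ : ∀ t, φ.tsat (W.label t) → W.label t ⊆ W.label s) :
    (∃ t, W.label t ⊂ W.label s ∧ W.lt t s) ∨ ∃ u, W.minimal φ u ∧ W.label u = W.label s := by
  rcases W.minimal_or_exists_minimal_lt hs with hmin | ⟨t, ht, hlt⟩
  · exact Or.inr ⟨s, hmin, rfl⟩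
  · rcases (hφ t ht.1).eq_or_ssubset with heq | hssub
    · exact Or.inr ⟨t, ht, heq⟩
    · exact Or.inl ⟨t, hssub, hlt⟩

theorem exists_minimal_caseSplit_not_tsat_dep [Fintype V] {s : W.S}
    (hcard : 1 < (W.label s).ncard) (hno : ∀ t, W.label t ⊂ W.label s → ¬ W.lt t s) :
    ∃ p u, W.minimal (caseSplit (subteamsOf (W.label s)) p) u ∧
      ¬ (dep [] p).tsat (W.label u) := by
  obtain ⟨p, hp⟩ := exists_not_tsat_dep_nil (Set.one_lt_ncard_iff_nontrivial_and_finite.1 hcard).1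
  have hsplit : ∀ Y, (caseSplit (subteamsOf (W.label s)) p).tsat Y ↔ Y ⊆ W.label s :=
    fun _ => tsat_caseSplit fun _ => tsat_subteamsOf
  rcases W.exists_lt_ssubset_or_exists_minimal_eq ((hsplit _).2 subset_rfl)
    fun t ht => (hsplit _).1 ht with ⟨t, hssub, hlt⟩ | ⟨u, hu, heq⟩
  · exact absurd hlt (hno t hssub)
  · exact ⟨p, u, hu, heq ▸ hp⟩

theorem triangle_of_forall_star [Fintype V] (h : ∀ φ ψ, W.star φ ψ) : W.triangle := by
  intro s hcard
  by_contra! hno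
  obtain ⟨p, u, hu, hdep⟩ := W.exists_minimal_caseSplit_not_tsat_dep hcard hno
  rcases h _ _ ⟨u, hu, rfl⟩ with ⟨t, ht, heq⟩ | ⟨t, ht, heq⟩
  · exact hdep (heq ▸ tsat_dep_nil_of_pos ht.1.2)
  · exact hdep (heq ▸ tsat_dep_nil_of_neg ht.1.2)

theorem triangle_of_systemP [Fintype V] (h : W.systemP) : W.triangle := by
  intro s hcard
  by_contra! hno
  obtain ⟨p, u, hu, hdep⟩ := W.exists_minimal_caseSplit_not_tsat_dep hcard hno
  have hor : W.ent (caseSplit (subteamsOf (W.label s)) p) (dep [] p) :=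
    h.2.2.2.2.2 _ _ _ (fun t ht => tsat_dep_nil_of_pos ht.1.2)
      fun t ht => tsat_dep_nil_of_neg ht.1.2
  exact hdep (hor u hu)

end PrefModel

theorem PDL_SystemP_characterisation_general {V : Type} [Fintype V]
    (W : PrefModel V) :
    (W.systemP ↔ W.triangle) ∧
      (W.triangle ↔ ∀ φ ψ : PDL V, W.star φ ψ) :=
  ⟨⟨W.triangle_of_systemP, fun h => W.systemP_of_forall_star (W.star_of_triangle h)⟩,
    ⟨W.star_of_triangle, W.triangle_of_forall_star⟩⟩

/-- Characterisation of System P for preferential propositional dependence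
logic: `⊢_W` satisfies System P iff `W` satisfies (△) iff (⋆) holds for all
PDL-formulas. -/
theorem PDL_SystemP_characterisation {V : Type} [Fintype V] [Nonempty V]
    (W : PrefModel V) :
    (W.systemP ↔ W.triangle) ∧
      (W.triangle ↔ ∀ φ ψ : PDL V, W.star φ ψ) :=
  PDL_SystemP_characterisation_general W
end

section
/- Preferential reconstruction of dependence logic entailment: let W_sup = (S, ℓ, ≺_sup) be the preferential model for PDL whose states are all nonempty teams over the finite set N, ℓ the identity, and Y ≺_sup X iff X ⊊ Y. Then for all PDL-formulas φ, ψ: φ ⊢_{W_sup} ψ if and only if every team X over N with X ⊨ φ satisfies X ⊨ ψ. -/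
/-- Preferential entailment `φ ⊢_{W_sup} ψ` for the preferential model
`W_sup` whose states are all nonempty teams, labelled by themselves, with
`Y ≺_sup X` iff `X ⊊ Y`: every nonempty team satisfying `φ` that has no
nonempty proper superteam satisfying `φ` must satisfy `ψ`. -/
def entSup {V : Type} (φ ψ : PDL V) : Prop :=
  ∀ X : Set (V → Bool), X.Nonempty → PDL.tsat φ X →
    (∀ Y : Set (V → Bool), Y.Nonempty → PDL.tsat φ Y → ¬ X ⊂ Y) →
    PDL.tsat ψ X

/-!
Every PDL-formula is satisfied by the empty team and is downward closed. Over finitely many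
variables, any team `X ⊨ φ` lies inside a `⊆`-maximal team `Y ⊨ φ`; such a `Y` is
`≺_sup`-minimal, so `φ ⊢_{W_sup} ψ` gives `Y ⊨ ψ`, and downward closure passes this to `X`.
-/

namespace PDL

variable {V : Type}

lemma tsat_empty_s14 (φ : PDL V) : tsat φ (∅ : Set (V → Bool)) := by
  induction φ with
  | pos | neg | dep => intro v hv; exact absurd hv (Set.notMem_empty v)
  | bot => rfl
  | top => trivial
  | conj φ ψ ihφ ihψ => exact ⟨ihφ, ihψ⟩
  | disj φ ψ ihφ ihψ => exact ⟨∅, ∅, (Set.union_self ∅).symm, ihφ, ihψ⟩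

lemma tsat_mono_s14 (φ : PDL V) {X Y : Set (V → Bool)} (hYX : Y ⊆ X) (hX : tsat φ X) :
    tsat φ Y := by
  induction φ generalizing X Y with
  | pos | neg => intro v hv; exact hX v (hYX hv)
  | bot => exact Set.subset_eq_empty hYX hX
  | top => trivial
  | dep as b => intro v hv v' hv'; exact hX v (hYX hv) v' (hYX hv')
  | conj φ ψ ihφ ihψ => exact ⟨ihφ hYX hX.1, ihψ hYX hX.2⟩
  | disj φ ψ ihφ ihψ =>
    obtain ⟨A, B, rfl, hA, hB⟩ := hX
    refine ⟨Y ∩ A, Y ∩ B, ?_, ihφ Set.inter_subset_right hA, ihψ Set.inter_subset_right hB⟩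
    rw [← Set.inter_union_distrib_left, Set.inter_eq_left.2 hYX]

end PDL

theorem entSup_iff_team_entailment_general {V : Type} [Fintype V]
    (φ ψ : PDL V) :
    entSup φ ψ ↔ ∀ X : Set (V → Bool), PDL.tsat φ X → PDL.tsat ψ X := by
  refine ⟨fun h X hX => ?_, fun h X _ hX _ => h X hX⟩
  obtain rfl | hXne := X.eq_empty_or_nonempty
  · exact PDL.tsat_empty_s14 ψ
  obtain ⟨Y, hXY, hYmax⟩ := Finite.exists_le_maximal (p := PDL.tsat φ) hX
  have hψY : PDL.tsat ψ Y :=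
    h Y (hXne.mono hXY) hYmax.prop fun Z _ hZ => hYmax.not_gt hZ
  exact PDL.tsat_mono_s14 ψ hXY hψY

/-- Preferential reconstruction of dependence logic entailment:
`φ ⊢_{W_sup} ψ` iff `φ ⊨ ψ` in team semantics. -/
theorem entSup_iff_team_entailment {V : Type} [Fintype V] [Nonempty V]
    (φ ψ : PDL V) :
    entSup φ ψ ↔ ∀ X : Set (V → Bool), PDL.tsat φ X → PDL.tsat ψ X :=
  entSup_iff_team_entailment_general φ ψ
end
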